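/- arXiv:1601.08152 — 3 statements merged into one kernel-verified Lean document; each statement's English description precedes it below -/
import Mathlib

section
/- Let V be a finite-dimensional real inner product space and II : V × V → W a symmetric bilinear map into an inner product space W such that ⟨II(X,X), II(X,X)⟩ = 4 for every unit vector X ∈ V. Then for every pair of orthonormal vectors X, Y ∈ V one has ⟨II(X,X), II(Y,Y)⟩ + 2‖II(X,Y)‖² = 4. -/
/-!
By homogeneity the quartic form `⟪II x x, II x x⟫` equals `4 ‖x‖⁴` everywhere. For orthonormal
`X, Y` the vectors `X ± Y` have squared norm `2`, so the form is `16` at both; adding the bilinear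
expansions of the two values cancels the odd terms and leaves
`32 = 16 + 4 ⟪II X X, II Y Y⟫ + 8 ‖II X Y‖²`.
-/

open scoped RealInnerProductSpace

section

variable {V W : Type*} [NormedAddCommGroup V] [InnerProductSpace ℝ V]
  [NormedAddCommGroup W] [InnerProductSpace ℝ W]

theorem LinearMap.inner_self_apply_self_eq_of_norm_eq_one (B : V →ₗ[ℝ] V →ₗ[ℝ] W) {c : ℝ}
    (h : ∀ x : V, ‖x‖ = 1 → ⟪B x x, B x x⟫ = c) (x : V) :
    ⟪B x x, B x x⟫ = c * ‖x‖ ^ 4 := by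
  rcases eq_or_ne x 0 with rfl | hx
  · simp
  obtain ⟨u, hu, hxu⟩ : ∃ u : V, ‖u‖ = 1 ∧ ‖x‖ • u = x :=
    ⟨‖x‖⁻¹ • x, norm_smul_inv_norm hx, smul_inv_smul₀ (norm_ne_zero_iff.mpr hx) x⟩
  conv_lhs => rw [← hxu]
  rw [map_smul, map_smul, LinearMap.smul_apply, real_inner_smul_left, real_inner_smul_right,
    real_inner_smul_left, real_inner_smul_right, h u hu]
  ring

theorem LinearMap.inner_apply_add_add_add_inner_apply_sub_sub (B : V →ₗ[ℝ] V →ₗ[ℝ] W)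
    (hB : ∀ x y : V, B x y = B y x) (x y : V) :
    ⟪B (x + y) (x + y), B (x + y) (x + y)⟫ + ⟪B (x - y) (x - y), B (x - y) (x - y)⟫
      = 2 * ⟪B x x, B x x⟫ + 2 * ⟪B y y, B y y⟫ + 4 * ⟪B x x, B y y⟫
        + 8 * ‖B x y‖ ^ 2 := by
  simp only [map_add, map_sub, LinearMap.add_apply, LinearMap.sub_apply, hB y x,
    inner_add_left, inner_add_right, inner_sub_left, inner_sub_right,
    real_inner_comm (B x x), real_inner_comm (B x y) (B y y), ← real_inner_self_eq_norm_sq]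
  ring

end

theorem stmt3_general {V W : Type*} [NormedAddCommGroup V] [InnerProductSpace ℝ V]
    [NormedAddCommGroup W] [InnerProductSpace ℝ W]
    (II : V →ₗ[ℝ] V →ₗ[ℝ] W) (hsymm : ∀ x y : V, II x y = II y x)
    (hnorm : ∀ x : V, ‖x‖ = 1 → ⟪II x x, II x x⟫ = (4 : ℝ))
    (X Y : V) (hX : ‖X‖ = 1) (hY : ‖Y‖ = 1) (hXY : ⟪X, Y⟫ = 0) :
    ⟪II X X, II Y Y⟫ + 2 * ‖II X Y‖ ^ 2 = 4 := by
  have hQ := II.inner_self_apply_self_eq_of_norm_eq_one hnorm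
  have hplus : ‖X + Y‖ ^ 2 = 2 := by rw [norm_add_sq_real, hX, hY, hXY]; norm_num
  have hminus : ‖X - Y‖ ^ 2 = 2 := by rw [norm_sub_sq_real, hX, hY, hXY]; norm_num
  have hsum := II.inner_apply_add_add_add_inner_apply_sub_sub hsymm X Y
  rw [hQ, hQ, hQ X, hQ Y, hX, hY, show ‖X + Y‖ ^ 4 = (‖X + Y‖ ^ 2) ^ 2 by ring,
    show ‖X - Y‖ ^ 4 = (‖X - Y‖ ^ 2) ^ 2 by ring, hplus, hminus] at hsum
  linarith

/-- Polarization identity for a symmetric bilinear second fundamental form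
with `⟨II(X,X),II(X,X)⟩ = 4` on unit vectors. -/
theorem stmt3 {V W : Type*} [NormedAddCommGroup V] [InnerProductSpace ℝ V]
    [FiniteDimensional ℝ V] [NormedAddCommGroup W] [InnerProductSpace ℝ W]
    (II : V →ₗ[ℝ] V →ₗ[ℝ] W) (hsymm : ∀ x y : V, II x y = II y x)
    (hnorm : ∀ x : V, ‖x‖ = 1 → ⟪II x x, II x x⟫ = (4 : ℝ))
    (X Y : V) (hX : ‖X‖ = 1) (hY : ‖Y‖ = 1) (hXY : ⟪X, Y⟫ = 0) :
    ⟪II X X, II Y Y⟫ + 2 * ‖II X Y‖ ^ 2 = 4 :=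
  stmt3_general II hsymm hnorm X Y hX hY hXY
end

section
/- Let S be a self-adjoint endomorphism of an (n+1)-dimensional real inner product space with eigenvalues 0 < k₁ ≤ ⋯ ≤ k_{n+1}. Suppose k_{n+1}/k₁ < √((n+1)/2). Then for every orthonormal basis {e₁,…,eₙ,N} and every unit vector X orthogonal to N, one has 2(‖S(X)‖² − ⟨S(X),N⟩²) + 2(‖S(N)‖² − ⟨S(N),N⟩²) < (⟨S(X),X⟩ + ⟨S(N),N⟩)·Σₖ⟨S(eₖ),eₖ⟩. -/
/-!
Expanding in an orthonormal eigenbasis of `S` with eigenvalues in `[m, M]`, `0 < m`, every unit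
vector `x` satisfies `m ≤ ⟪S x, x⟫ ≤ M` and `‖S x‖² ≤ M ⟪S x, x⟫`, while the trace of `S`,
read off in the basis `e₁, …, eₙ, N`, is at least `n m + M`. Dropping the squared inner products,
the inequality is then reduced to a polynomial inequality in `m, M, a = ⟪S X, X⟫`,
`c = ⟪S N, N⟫`, which holds precisely because the pinching gives `n m² > 2 M² - m²`.
-/

open scoped RealInnerProductSpace

namespace OrthonormalBasis

variable {ι E : Type*} [Fintype ι] [NormedAddCommGroup E] [InnerProductSpace ℝ E]
  (v : OrthonormalBasis ι ℝ E) {S : E →ₗ[ℝ] E} {k : ι → ℝ}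

theorem inner_apply_eq_mul_inner (hS : ∀ i, S (v i) = k i • v i) (i : ι) (x : E) :
    ⟪v i, S x⟫ = k i * ⟪v i, x⟫ := by
  conv_lhs => rw [← v.sum_repr' x]
  simp only [map_sum, map_smul, hS, smul_smul]
  exact v.orthonormal.inner_right_fintype (fun j => ⟪v j, x⟫ * k j) i |>.trans (mul_comm _ _)

theorem inner_apply_self_eq_sum (hS : ∀ i, S (v i) = k i • v i) (x : E) :
    ⟪S x, x⟫ = ∑ i, k i * ⟪v i, x⟫ ^ 2 := by
  rw [← v.sum_inner_mul_inner]
  refine Finset.sum_congr rfl fun i _ => ?_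
  rw [real_inner_comm, v.inner_apply_eq_mul_inner hS]
  ring

theorem norm_apply_sq_eq_sum (hS : ∀ i, S (v i) = k i • v i) (x : E) :
    ‖S x‖ ^ 2 = ∑ i, k i ^ 2 * ⟪v i, x⟫ ^ 2 := by
  rw [← v.sum_sq_inner_right]
  refine Finset.sum_congr rfl fun i _ => ?_
  rw [v.inner_apply_eq_mul_inner hS]
  ring

theorem mul_norm_sq_le_inner_apply_self (hS : ∀ i, S (v i) = k i • v i) {m : ℝ}
    (hm : ∀ i, m ≤ k i) (x : E) : m * ‖x‖ ^ 2 ≤ ⟪S x, x⟫ := by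
  rw [← v.sum_sq_inner_right, Finset.mul_sum, v.inner_apply_self_eq_sum hS]
  exact Finset.sum_le_sum fun i _ => mul_le_mul_of_nonneg_right (hm i) (sq_nonneg _)

theorem inner_apply_self_le_mul_norm_sq (hS : ∀ i, S (v i) = k i • v i) {M : ℝ}
    (hM : ∀ i, k i ≤ M) (x : E) : ⟪S x, x⟫ ≤ M * ‖x‖ ^ 2 := by
  rw [← v.sum_sq_inner_right, Finset.mul_sum, v.inner_apply_self_eq_sum hS]
  exact Finset.sum_le_sum fun i _ => mul_le_mul_of_nonneg_right (hM i) (sq_nonneg _)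

theorem norm_apply_sq_le_mul_inner_apply_self (hS : ∀ i, S (v i) = k i • v i) {M : ℝ}
    (hk : ∀ i, 0 ≤ k i) (hM : ∀ i, k i ≤ M) (x : E) : ‖S x‖ ^ 2 ≤ M * ⟪S x, x⟫ := by
  rw [v.norm_apply_sq_eq_sum hS, v.inner_apply_self_eq_sum hS, Finset.mul_sum]
  refine Finset.sum_le_sum fun i _ => ?_
  rw [← mul_assoc, sq (k i), mul_comm M]
  exact mul_le_mul_of_nonneg_right (mul_le_mul_of_nonneg_left (hM i) (hk i)) (sq_nonneg _)

theorem sum_inner_apply_self_eq_sum {κ : Type*} [Fintype κ] (hS : ∀ i, S (v i) = k i • v i)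
    (b : OrthonormalBasis κ ℝ E) : ∑ j, ⟪S (b j), b j⟫ = ∑ i, k i := by
  have htrace := (LinearMap.trace_eq_sum_inner S b).symm.trans (LinearMap.trace_eq_sum_inner S v)
  simp only [real_inner_comm (S _)] at htrace
  rw [htrace]
  refine Finset.sum_congr rfl fun i _ => ?_
  rw [hS, real_inner_smul_left, real_inner_self_eq_norm_sq, v.orthonormal.1 i, one_pow, mul_one]

end OrthonormalBasis

theorem Monotone.mul_apply_zero_add_apply_last_le_sum {n : ℕ} {k : Fin (n + 1) → ℝ}
    (hk : Monotone k) : n * k 0 + k (Fin.last n) ≤ ∑ i, k i := by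
  rw [Fin.sum_univ_castSucc]
  gcongr
  simpa using Finset.card_nsmul_le_sum Finset.univ (fun i : Fin n => k i.castSucc) (k 0)
    fun i _ => hk (Fin.zero_le _)

/-- With `x = a - m`, `y = c - m`, `z = M - m ≥ x, y` the left side equals
`5m²z + m²(z-x) + m²y + 4mz² + my² + 2mxz + mx(z-y) + 3myz + 2z²x + 2z²y`. -/
theorem pinching_polynomial_nonneg {m M a c : ℝ} (hm : 0 ≤ m) (hma : m ≤ a) (haM : a ≤ M)
    (hmc : m ≤ c) (hcM : c ≤ M) :
    0 ≤ (a + c) * (2 * M ^ 2 - m ^ 2 - M * m - c * m) + 2 * c ^ 2 * m := by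
  have hx := sub_nonneg.2 hma
  have hy := sub_nonneg.2 hmc
  have hz := sub_nonneg.2 (hma.trans haM)
  have hzx := sub_nonneg.2 haM
  have hzy := sub_nonneg.2 hcM
  have hmm := mul_nonneg hm hm
  nlinarith [mul_nonneg hmm hz, mul_nonneg hmm hzx, mul_nonneg hmm hy,
    mul_nonneg (mul_nonneg hm hz) hz, mul_nonneg (mul_nonneg hm hy) hy,
    mul_nonneg (mul_nonneg hm hx) hz, mul_nonneg (mul_nonneg hm hx) hzy,
    mul_nonneg (mul_nonneg hm hz) hy, mul_nonneg (mul_nonneg hz hz) hx,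
    mul_nonneg (mul_nonneg hz hz) hy]

theorem two_mul_add_two_mul_sub_sq_lt_mul_of_pinched {n m M a c p q t : ℝ} (hm : 0 < m) (hma : m ≤ a) (haM : a ≤ M)
    (hmc : m ≤ c) (hcM : c ≤ M) (hp : p ≤ M * a) (hq : q ≤ M * c)
    (ht : n * m + M ≤ t + c) (hpinch : 2 * M ^ 2 < (n + 1) * m ^ 2) :
    2 * p + 2 * (q - c ^ 2) < (a + c) * t := by
  have hac : 0 < a + c := by linarith
  have hgap : 0 < (a + c) * (n * m - M - c) + 2 * c ^ 2 := by
    have := pinching_polynomial_nonneg hm.le hma haM hmc hcM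
    have := mul_lt_mul_of_pos_left (by linarith : 2 * M ^ 2 - m ^ 2 < n * m ^ 2) hac
    exact pos_of_mul_pos_right (by linarith) hm.le
  calc 2 * p + 2 * (q - c ^ 2) ≤ 2 * M * (a + c) - 2 * c ^ 2 := by linarith
    _ < (a + c) * (n * m + M - c) := by linarith
    _ ≤ (a + c) * t := mul_le_mul_of_nonneg_left (by linarith) hac.le

theorem stmt5_general {E : Type*} [NormedAddCommGroup E] [InnerProductSpace ℝ E]
    (n : ℕ)
    (S : E →ₗ[ℝ] E)
    (v : OrthonormalBasis (Fin (n + 1)) ℝ E) (k : Fin (n + 1) → ℝ)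
    (hmono : Monotone k) (hpos : 0 < k 0)
    (heig : ∀ i, S (v i) = k i • v i)
    (hpinch : k (Fin.last n) / k 0 < Real.sqrt ((n + 1) / 2))
    (b : OrthonormalBasis (Fin (n + 1)) ℝ E)
    (X : E) (hX : ‖X‖ = 1) :
    2 * (‖S X‖ ^ 2 - ⟪S X, b (Fin.last n)⟫ ^ 2) +
      2 * (‖S (b (Fin.last n))‖ ^ 2 - ⟪S (b (Fin.last n)), b (Fin.last n)⟫ ^ 2) <
    (⟪S X, X⟫ + ⟪S (b (Fin.last n)), b (Fin.last n)⟫) *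
      ∑ i : Fin n, ⟪S (b i.castSucc), b i.castSucc⟫ := by
  set N := b (Fin.last n)
  have hN : ‖N‖ = 1 := b.orthonormal.1 _
  have hm : ∀ i, k 0 ≤ k i := fun i => hmono (Fin.zero_le i)
  have hM : ∀ i, k i ≤ k (Fin.last n) := fun i => hmono (Fin.le_last i)
  have hk : ∀ i, 0 ≤ k i := fun i => hpos.le.trans (hm i)
  have hpinch' : 2 * k (Fin.last n) ^ 2 < (n + 1) * k 0 ^ 2 := by
    rw [Real.lt_sqrt (div_nonneg (hk _) hpos.le), div_pow, div_lt_iff₀ (by positivity)] at hpinch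
    linarith
  have htrace : n * k 0 + k (Fin.last n) ≤
      ∑ i : Fin n, ⟪S (b i.castSucc), b i.castSucc⟫ + ⟪S N, N⟫ := by
    rw [← Fin.sum_univ_castSucc (fun j => ⟪S (b j), b j⟫), v.sum_inner_apply_self_eq_sum heig b]
    exact hmono.mul_apply_zero_add_apply_last_le_sum
  refine two_mul_add_two_mul_sub_sq_lt_mul_of_pinched hpos ?_ ?_ ?_ ?_ ?_ ?_ htrace hpinch'
  · simpa [hX] using v.mul_norm_sq_le_inner_apply_self heig hm X
  · simpa [hX] using v.inner_apply_self_le_mul_norm_sq heig hM X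
  · simpa [hN] using v.mul_norm_sq_le_inner_apply_self heig hm N
  · simpa [hN] using v.inner_apply_self_le_mul_norm_sq heig hM N
  · linarith [sq_nonneg ⟪S X, N⟫, v.norm_apply_sq_le_mul_inner_apply_self heig hk hM X]
  · linarith [v.norm_apply_sq_le_mul_inner_apply_self heig hk hM N]

/-- Pointwise algebraic inequality for a pinched positive self-adjoint shape
operator `S` with eigenvalues `0 < k₁ ≤ ⋯ ≤ k_{n+1}` satisfying
`k_{n+1}/k₁ < √((n+1)/2)`. -/
theorem stmt5 {E : Type*} [NormedAddCommGroup E] [InnerProductSpace ℝ E]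
    (n : ℕ) (hdim : Module.finrank ℝ E = n + 1)
    (S : E →ₗ[ℝ] E) (hsa : ∀ x y : E, ⟪S x, y⟫ = ⟪x, S y⟫)
    (v : OrthonormalBasis (Fin (n + 1)) ℝ E) (k : Fin (n + 1) → ℝ)
    (hmono : Monotone k) (hpos : 0 < k 0)
    (heig : ∀ i, S (v i) = k i • v i)
    (hpinch : k (Fin.last n) / k 0 < Real.sqrt ((n + 1) / 2))
    (b : OrthonormalBasis (Fin (n + 1)) ℝ E)
    (X : E) (hX : ‖X‖ = 1) (hXN : ⟪X, b (Fin.last n)⟫ = 0) :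
    2 * (‖S X‖ ^ 2 - ⟪S X, b (Fin.last n)⟫ ^ 2) +
      2 * (‖S (b (Fin.last n))‖ ^ 2 - ⟪S (b (Fin.last n)), b (Fin.last n)⟫ ^ 2) <
    (⟪S X, X⟫ + ⟪S (b (Fin.last n)), b (Fin.last n)⟫) *
      ∑ i : Fin n, ⟪S (b i.castSucc), b i.castSucc⟫ :=
  stmt5_general n S v k hmono hpos heig hpinch b X hX
end

section
/- Let S be a self-adjoint positive-definite endomorphism of an (n+1)-dimensional real inner product space with smallest eigenvalue k₁ and largest eigenvalue k_{n+1}. Then for every unit vector X and every unit vector N orthogonal to X: ‖S(X)‖² − ⟨S(X),N⟩² ≤ k_{n+1}², ‖S(N)‖² − ⟨S(N),N⟩² ≤ k_{n+1}² − k₁², and (⟨S(X),X⟩ + ⟨S(N),N⟩)·tr(S) ≥ 2(n+1)k₁². -/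
/-!
In an orthonormal eigenbasis `v` of `S`, the coefficients of `S x` are `k i * ⟪v i, x⟫`, so
`‖S x‖²`, `⟪S x, x⟫` and `tr S` are the sums `∑ kᵢ² ⟪v i, x⟫²`, `∑ kᵢ ⟪v i, x⟫²` and `∑ kᵢ`.
For a unit vector the weights `⟪v i, x⟫²` sum to `1`, so the first two lie between the extreme
values of `kᵢ²` and `kᵢ`. The three estimates follow: drop the subtracted square in the first,
bound it below by `k₁²` in the second, and multiply `⟪S X, X⟫ + ⟪S N, N⟫ ≥ 2 k₁` by
`tr S ≥ (n + 1) k₁` in the third.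
-/

open scoped RealInnerProductSpace

section OrthonormalEigenbasis

variable {ι E : Type*} [Fintype ι] [NormedAddCommGroup E] [InnerProductSpace ℝ E]
  {S : E →ₗ[ℝ] E} {v : OrthonormalBasis ι ℝ E} {k : ι → ℝ}

lemma inner_apply_eq_mul_inner_of_eigenbasis (heig : ∀ i, S (v i) = k i • v i) (x : E) (i : ι) :
    ⟪v i, S x⟫ = k i * ⟪v i, x⟫ := by
  classical
  conv_lhs => rw [← v.sum_repr' x]
  simp [heig, inner_sum, inner_smul_right, orthonormal_iff_ite.mp v.orthonormal, mul_comm]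

lemma norm_apply_sq_eq_sum_of_eigenbasis (heig : ∀ i, S (v i) = k i • v i) (x : E) :
    ‖S x‖ ^ 2 = ∑ i, k i ^ 2 * ⟪v i, x⟫ ^ 2 := by
  simp_rw [← v.sum_sq_inner_right, inner_apply_eq_mul_inner_of_eigenbasis heig, mul_pow]

lemma inner_apply_self_eq_sum_of_eigenbasis (heig : ∀ i, S (v i) = k i • v i) (x : E) :
    ⟪S x, x⟫ = ∑ i, k i * ⟪v i, x⟫ ^ 2 := by
  rw [real_inner_comm, ← v.sum_inner_mul_inner]
  refine Finset.sum_congr rfl fun i _ => ?_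
  rw [inner_apply_eq_mul_inner_of_eigenbasis heig, real_inner_comm]
  ring

lemma trace_eq_sum_of_eigenbasis (heig : ∀ i, S (v i) = k i • v i) :
    LinearMap.trace ℝ E S = ∑ i, k i := by
  simp [LinearMap.trace_eq_sum_inner S v, heig, inner_smul_right]

lemma norm_apply_sq_le_of_eigenbasis (heig : ∀ i, S (v i) = k i • v i) {c : ℝ}
    (hk : ∀ i, k i ^ 2 ≤ c) (x : E) : ‖S x‖ ^ 2 ≤ c * ‖x‖ ^ 2 := by
  rw [norm_apply_sq_eq_sum_of_eigenbasis heig, ← v.sum_sq_inner_right, Finset.mul_sum]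
  exact Finset.sum_le_sum fun i _ => mul_le_mul_of_nonneg_right (hk i) (sq_nonneg _)

lemma mul_norm_sq_le_inner_apply_self_of_eigenbasis (heig : ∀ i, S (v i) = k i • v i) {a : ℝ}
    (hk : ∀ i, a ≤ k i) (x : E) : a * ‖x‖ ^ 2 ≤ ⟪S x, x⟫ := by
  rw [inner_apply_self_eq_sum_of_eigenbasis heig, ← v.sum_sq_inner_right, Finset.mul_sum]
  exact Finset.sum_le_sum fun i _ => mul_le_mul_of_nonneg_right (hk i) (sq_nonneg _)

lemma card_mul_le_trace_of_eigenbasis (heig : ∀ i, S (v i) = k i • v i) {a : ℝ}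
    (hk : ∀ i, a ≤ k i) : Fintype.card ι * a ≤ LinearMap.trace ℝ E S := by
  rw [trace_eq_sum_of_eigenbasis heig, ← nsmul_eq_mul]
  exact Finset.card_nsmul_le_sum _ _ _ fun i _ => hk i

end OrthonormalEigenbasis

theorem stmt6_general {E : Type*} [NormedAddCommGroup E] [InnerProductSpace ℝ E]
    (n : ℕ) (S : E →ₗ[ℝ] E)
    (v : OrthonormalBasis (Fin (n + 1)) ℝ E) (k : Fin (n + 1) → ℝ)
    (hmono : Monotone k) (hpos : 0 < k 0)
    (heig : ∀ i, S (v i) = k i • v i)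
    (X N : E) (hX : ‖X‖ = 1) (hN : ‖N‖ = 1) :
    ‖S X‖ ^ 2 - ⟪S X, N⟫ ^ 2 ≤ k (Fin.last n) ^ 2 ∧
    ‖S N‖ ^ 2 - ⟪S N, N⟫ ^ 2 ≤ k (Fin.last n) ^ 2 - k 0 ^ 2 ∧
    (⟪S X, X⟫ + ⟪S N, N⟫) * LinearMap.trace ℝ E S ≥ 2 * (n + 1) * k 0 ^ 2 := by
  have hmin : ∀ i, k 0 ≤ k i := fun i => hmono (Fin.zero_le i)
  have hmax_sq : ∀ i, k i ^ 2 ≤ k (Fin.last n) ^ 2 := fun i =>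
    pow_le_pow_left₀ (hpos.trans_le (hmin i)).le (hmono (Fin.le_last i)) 2
  have hSX : ‖S X‖ ^ 2 ≤ k (Fin.last n) ^ 2 := by
    simpa [hX] using norm_apply_sq_le_of_eigenbasis heig hmax_sq X
  have hSN : ‖S N‖ ^ 2 ≤ k (Fin.last n) ^ 2 := by
    simpa [hN] using norm_apply_sq_le_of_eigenbasis heig hmax_sq N
  have hSXX : k 0 ≤ ⟪S X, X⟫ := by
    simpa [hX] using mul_norm_sq_le_inner_apply_self_of_eigenbasis heig hmin X
  have hSNN : k 0 ≤ ⟪S N, N⟫ := by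
    simpa [hN] using mul_norm_sq_le_inner_apply_self_of_eigenbasis heig hmin N
  have htr : (n + 1) * k 0 ≤ LinearMap.trace ℝ E S := by
    simpa using card_mul_le_trace_of_eigenbasis heig hmin
  refine ⟨by nlinarith [sq_nonneg ⟪S X, N⟫], by nlinarith, ?_⟩
  calc 2 * (n + 1) * k 0 ^ 2 = (2 * k 0) * ((n + 1) * k 0) := by ring
    _ ≤ (⟪S X, X⟫ + ⟪S N, N⟫) * LinearMap.trace ℝ E S :=
      mul_le_mul (by linarith) htr (by positivity) (by linarith)

/-- Three eigenvalue estimates for a self-adjoint positive-definite operator `S`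
with smallest eigenvalue `k₁ = k 0` and largest eigenvalue `k_{n+1} = k (Fin.last n)`. -/
theorem stmt6 {E : Type*} [NormedAddCommGroup E] [InnerProductSpace ℝ E]
    [FiniteDimensional ℝ E]
    (n : ℕ) (hdim : Module.finrank ℝ E = n + 1)
    (S : E →ₗ[ℝ] E) (hsa : ∀ x y : E, ⟪S x, y⟫ = ⟪x, S y⟫)
    (v : OrthonormalBasis (Fin (n + 1)) ℝ E) (k : Fin (n + 1) → ℝ)
    (hmono : Monotone k) (hpos : 0 < k 0)
    (heig : ∀ i, S (v i) = k i • v i)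
    (X N : E) (hX : ‖X‖ = 1) (hN : ‖N‖ = 1) (hXN : ⟪X, N⟫ = 0) :
    ‖S X‖ ^ 2 - ⟪S X, N⟫ ^ 2 ≤ k (Fin.last n) ^ 2 ∧
    ‖S N‖ ^ 2 - ⟪S N, N⟫ ^ 2 ≤ k (Fin.last n) ^ 2 - k 0 ^ 2 ∧
    (⟪S X, X⟫ + ⟪S N, N⟫) * LinearMap.trace ℝ E S ≥ 2 * (n + 1) * k 0 ^ 2 :=
  stmt6_general n S v k hmono hpos heig X N hX hN
end
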